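/- Let AND : {0,1}² → {0,1} be the two-bit AND function and let β_1, β_2 > 0 be costs. Then ADV_{(β_1,β_2)}(AND) ≥ √(β_1² + β_2²). -/

import Mathlib

open scoped Matrix

/-- The spectral norm of a complex matrix. -/
noncomputable def specNorm {p q : Type*} [Fintype p] [Fintype q] [DecidableEq q]
    (A : Matrix p q ℂ) : ℝ :=
  ‖LinearMap.toContinuousLinearMap (Matrix.toEuclideanLin A)‖

/-- The zero-one matrix `D_i` with `D_i[x,y] = 1` iff `x_i ≠ y_i`. -/
def Dmat {I : Type*} (i : I) : Matrix (I → Bool) (I → Bool) ℂ :=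
  Matrix.of fun x y => if x i ≠ y i then 1 else 0

/-- The nonnegative adversary bound with costs `α`:
`ADV_α(g) = sup_Γ min_i α_i ‖Γ‖ / ‖Γ ∘ D_i‖`, the supremum over nonzero adversary
matrices `Γ` with real nonnegative entries. -/
noncomputable def ADVcost {I : Type*} [Fintype I] [DecidableEq I]
    (g : (I → Bool) → Bool) (α : I → ℝ) : ℝ :=
  sSup { r : ℝ | ∃ Γ : Matrix (I → Bool) (I → Bool) ℂ, Γ.IsHermitian ∧
    (∀ x y, g x = g y → Γ x y = 0) ∧
    (∀ x y, ∃ t : ℝ, 0 ≤ t ∧ Γ x y = (t : ℂ)) ∧ Γ ≠ 0 ∧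
    r = ⨅ i : I, α i * specNorm Γ / specNorm (Γ ⊙ Dmat i) }

variable {p q : Type*} [Fintype p] [Fintype q] [DecidableEq q]

lemma specNorm_nonneg (A : Matrix p q ℂ) : 0 ≤ specNorm A := norm_nonneg _

lemma enorm_eq (w : p → ℂ) :
    ‖(WithLp.equiv 2 (p → ℂ)).symm w‖ = Real.sqrt (∑ x, ‖w x‖^2) := by
  rw [EuclideanSpace.norm_eq]
  simp [WithLp.equiv_symm_apply, PiLp.toLp_apply]

lemma specNorm_le_bound (A : Matrix p q ℂ) (c : ℝ) (hc : 0 ≤ c)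
    (h : ∀ v : q → ℂ, Real.sqrt (∑ x, ‖(A *ᵥ v) x‖^2) ≤ c * Real.sqrt (∑ y, ‖v y‖^2)) :
    specNorm A ≤ c := by
  apply ContinuousLinearMap.opNorm_le_bound _ hc
  intro v
  rw [LinearMap.coe_toContinuousLinearMap']
  have h2 : v = (WithLp.equiv 2 (q → ℂ)).symm ((WithLp.equiv 2 (q → ℂ)) v) := rfl
  rw [h2, (show ∀ w, Matrix.toEuclideanLin A ((WithLp.equiv 2 (q → ℂ)).symm w) = (WithLp.equiv 2 (p → ℂ)).symm (A *ᵥ w) from fun _ => rfl), enorm_eq, enorm_eq]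
  exact h _

lemma specNorm_mulVec_le (A : Matrix p q ℂ) (v : q → ℂ) :
    Real.sqrt (∑ x, ‖(A *ᵥ v) x‖^2) ≤ specNorm A * Real.sqrt (∑ y, ‖v y‖^2) := by
  have := (LinearMap.toContinuousLinearMap (Matrix.toEuclideanLin A)).le_opNorm
    ((WithLp.equiv 2 (q → ℂ)).symm v)
  rw [LinearMap.coe_toContinuousLinearMap'] at this
  rwa [(show ∀ w, Matrix.toEuclideanLin A ((WithLp.equiv 2 (q → ℂ)).symm w) = (WithLp.equiv 2 (p → ℂ)).symm (A *ᵥ w) from fun _ => rfl), enorm_eq, enorm_eq] at this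

lemma apply_le_sqrt_sum (w : p → ℂ) (x : p) :
    ‖w x‖ ≤ Real.sqrt (∑ i, ‖w i‖^2) := by
  rw [show ‖w x‖ = Real.sqrt (‖w x‖^2) from (Real.sqrt_sq (norm_nonneg _)).symm]
  apply Real.sqrt_le_sqrt
  exact Finset.single_le_sum (f := fun i => ‖w i‖^2) (fun i _ => by positivity) (Finset.mem_univ x)

lemma entry_le_specNorm (A : Matrix p q ℂ) (x : p) (y : q) :
    ‖A x y‖ ≤ specNorm A := by
  have h := specNorm_mulVec_le A (Pi.single y 1)
  have hv : ∑ j : q, ‖(Pi.single y 1 : q → ℂ) j‖^2 = 1 := by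
    rw [Finset.sum_eq_single y]
    · simp
    · intro b _ hb; simp [Pi.single_apply, hb]
    · simp
  rw [hv, Real.sqrt_one, mul_one] at h
  refine le_trans ?_ (le_trans (apply_le_sqrt_sum _ x) h)
  simp [Matrix.mulVec_single]

lemma sum4 {M : Type*} [AddCommMonoid M] (f : (Fin 2 → Bool) → M) :
    ∑ x, f x = f ![false,false] + f ![false,true] + f ![true,false] + f ![true,true] := by
  rw [← Equiv.sum_comp (piFinTwoEquiv fun _ => Bool).symm f, Fintype.sum_prod_type]
  have hc : ∀ a b : Bool, (Fin.cons a (Fin.cons b finZeroElim) : Fin 2 → Bool) = ![a,b] := by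
    intro a b; funext i; fin_cases i <;> rfl
  simp only [Fintype.sum_bool, piFinTwoEquiv_symm_apply, hc]
  abel

def vFF : Fin 2 → Bool := ![false, false]
def vFT : Fin 2 → Bool := ![false, true]
def vTF : Fin 2 → Bool := ![true, false]
def vTT : Fin 2 → Bool := ![true, true]

lemma eFF : (![false, false] : Fin 2 → Bool) = vFF := rfl
lemma eFT : (![false, true] : Fin 2 → Bool) = vFT := rfl
lemma eTF : (![true, false] : Fin 2 → Bool) = vTF := rfl
lemma eTT : (![true, true] : Fin 2 → Bool) = vTT := rfl

noncomputable def Gmat (β₁ β₂ : ℝ) : Matrix (Fin 2 → Bool) (Fin 2 → Bool) ℂ :=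
  Matrix.of fun x y =>
    if (x = vTT ∧ y = vFT) ∨ (x = vFT ∧ y = vTT) then (β₁ : ℂ)
    else if (x = vTT ∧ y = vTF) ∨ (x = vTF ∧ y = vTT) then (β₂ : ℂ) else 0


section
variable (β₁ β₂ : ℝ) (v : (Fin 2 → Bool) → ℂ)

lemma GFF : (Gmat β₁ β₂ *ᵥ v) vFF = 0 := by
  simp only [Matrix.mulVec, dotProduct]
  rw [sum4 (fun y => Gmat β₁ β₂ vFF y * v y)]
  simp (config := { decide := true }) [Gmat, vFF, vFT, vTF, vTT]

lemma GFT : (Gmat β₁ β₂ *ᵥ v) vFT = (β₁ : ℂ) * v vTT := by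
  simp only [Matrix.mulVec, dotProduct]
  rw [sum4 (fun y => Gmat β₁ β₂ vFT y * v y)]
  simp (config := { decide := true }) [Gmat, vFF, vFT, vTF, vTT]

lemma GTF : (Gmat β₁ β₂ *ᵥ v) vTF = (β₂ : ℂ) * v vTT := by
  simp only [Matrix.mulVec, dotProduct]
  rw [sum4 (fun y => Gmat β₁ β₂ vTF y * v y)]
  simp (config := { decide := true }) [Gmat, vFF, vFT, vTF, vTT]

lemma GTT : (Gmat β₁ β₂ *ᵥ v) vTT = (β₁ : ℂ) * v vFT + (β₂ : ℂ) * v vTF := by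
  simp only [Matrix.mulVec, dotProduct]
  rw [sum4 (fun y => Gmat β₁ β₂ vTT y * v y)]
  simp (config := { decide := true }) [Gmat, vFF, vFT, vTF, vTT]

end


section
variable (β₁ β₂ : ℝ) (v : (Fin 2 → Bool) → ℂ)

lemma H0FF : ((Gmat β₁ β₂ ⊙ Dmat (0 : Fin 2)) *ᵥ v) vFF = 0 := by
  simp only [Matrix.mulVec, dotProduct]
  rw [sum4 (fun y => (Gmat β₁ β₂ ⊙ Dmat (0 : Fin 2)) vFF y * v y)]
  simp (config := { decide := true }) [Gmat, Dmat, Matrix.hadamard, vFF, vFT, vTF, vTT]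

lemma H0FT : ((Gmat β₁ β₂ ⊙ Dmat (0 : Fin 2)) *ᵥ v) vFT = (β₁ : ℂ) * v vTT := by
  simp only [Matrix.mulVec, dotProduct]
  rw [sum4 (fun y => (Gmat β₁ β₂ ⊙ Dmat (0 : Fin 2)) vFT y * v y)]
  simp (config := { decide := true }) [Gmat, Dmat, Matrix.hadamard, vFF, vFT, vTF, vTT]

lemma H0TF : ((Gmat β₁ β₂ ⊙ Dmat (0 : Fin 2)) *ᵥ v) vTF = 0 := by
  simp only [Matrix.mulVec, dotProduct]
  rw [sum4 (fun y => (Gmat β₁ β₂ ⊙ Dmat (0 : Fin 2)) vTF y * v y)]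
  simp (config := { decide := true }) [Gmat, Dmat, Matrix.hadamard, vFF, vFT, vTF, vTT]

lemma H0TT : ((Gmat β₁ β₂ ⊙ Dmat (0 : Fin 2)) *ᵥ v) vTT = (β₁ : ℂ) * v vFT := by
  simp only [Matrix.mulVec, dotProduct]
  rw [sum4 (fun y => (Gmat β₁ β₂ ⊙ Dmat (0 : Fin 2)) vTT y * v y)]
  simp (config := { decide := true }) [Gmat, Dmat, Matrix.hadamard, vFF, vFT, vTF, vTT]

lemma H1FF : ((Gmat β₁ β₂ ⊙ Dmat (1 : Fin 2)) *ᵥ v) vFF = 0 := by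
  simp only [Matrix.mulVec, dotProduct]
  rw [sum4 (fun y => (Gmat β₁ β₂ ⊙ Dmat (1 : Fin 2)) vFF y * v y)]
  simp (config := { decide := true }) [Gmat, Dmat, Matrix.hadamard, vFF, vFT, vTF, vTT]

lemma H1FT : ((Gmat β₁ β₂ ⊙ Dmat (1 : Fin 2)) *ᵥ v) vFT = 0 := by
  simp only [Matrix.mulVec, dotProduct]
  rw [sum4 (fun y => (Gmat β₁ β₂ ⊙ Dmat (1 : Fin 2)) vFT y * v y)]
  simp (config := { decide := true }) [Gmat, Dmat, Matrix.hadamard, vFF, vFT, vTF, vTT]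

lemma H1TF : ((Gmat β₁ β₂ ⊙ Dmat (1 : Fin 2)) *ᵥ v) vTF = (β₂ : ℂ) * v vTT := by
  simp only [Matrix.mulVec, dotProduct]
  rw [sum4 (fun y => (Gmat β₁ β₂ ⊙ Dmat (1 : Fin 2)) vTF y * v y)]
  simp (config := { decide := true }) [Gmat, Dmat, Matrix.hadamard, vFF, vFT, vTF, vTT]

lemma H1TT : ((Gmat β₁ β₂ ⊙ Dmat (1 : Fin 2)) *ᵥ v) vTT = (β₂ : ℂ) * v vTF := by
  simp only [Matrix.mulVec, dotProduct]
  rw [sum4 (fun y => (Gmat β₁ β₂ ⊙ Dmat (1 : Fin 2)) vTT y * v y)]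
  simp (config := { decide := true }) [Gmat, Dmat, Matrix.hadamard, vFF, vFT, vTF, vTT]

end

section
variable {β₁ β₂ : ℝ}

lemma specNorm_G (hβ₁ : 0 < β₁) (hβ₂ : 0 < β₂) :
    specNorm (Gmat β₁ β₂) = Real.sqrt (β₁^2 + β₂^2) := by
  apply le_antisymm
  · apply specNorm_le_bound _ _ (Real.sqrt_nonneg _)
    intro v
    rw [sum4 (fun x => ‖(Gmat β₁ β₂ *ᵥ v) x‖^2)]
    simp only [eFF, eFT, eTF, eTT]
    rw [GFF, GFT, GTF, GTT,
      show Real.sqrt (β₁^2+β₂^2) * Real.sqrt (∑ y, ‖v y‖^2)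
        = Real.sqrt ((β₁^2+β₂^2) * ∑ y, ‖v y‖^2) from (Real.sqrt_mul (by positivity) _).symm]
    apply Real.sqrt_le_sqrt
    rw [sum4 (fun y => ‖v y‖^2)]
    simp only [eFF, eFT, eTF, eTT]
    have tri : ‖(β₁:ℂ) * v vFT + (β₂:ℂ) * v vTF‖ ≤ β₁ * ‖v vFT‖ + β₂ * ‖v vTF‖ := by
      refine (norm_add_le _ _).trans (le_of_eq ?_)
      simp [abs_of_pos hβ₁, abs_of_pos hβ₂]
    have tri2 := pow_le_pow_left₀ (norm_nonneg _) tri 2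
    simp only [norm_zero, norm_mul, Complex.norm_real, Real.norm_eq_abs,
      abs_of_pos hβ₁, abs_of_pos hβ₂]
    nlinarith [tri2, sq_nonneg (β₁ * ‖v vTF‖ - β₂ * ‖v vFT‖), sq_nonneg (‖v vFF‖),
      norm_nonneg (v vFF), norm_nonneg (v vFT), norm_nonneg (v vTF), norm_nonneg (v vTT)]
  · have h := specNorm_mulVec_le (Gmat β₁ β₂) (Pi.single vTT 1)
    rw [sum4 (fun x => ‖(Gmat β₁ β₂ *ᵥ Pi.single vTT 1) x‖^2),
      sum4 (fun y => ‖(Pi.single vTT 1 : (Fin 2 → Bool) → ℂ) y‖^2)] at h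
    simp only [eFF, eFT, eTF, eTT] at h
    rw [GFF, GFT, GTF, GTT] at h
    simp (config := { decide := true }) [Pi.single_apply, abs_of_pos hβ₁, abs_of_pos hβ₂] at h
    exact h

end

section
variable {β₁ β₂ : ℝ}

lemma specNorm_H0 (hβ₁ : 0 < β₁) (hβ₂ : 0 < β₂) :
    specNorm (Gmat β₁ β₂ ⊙ Dmat (0 : Fin 2)) = β₁ := by
  apply le_antisymm
  · apply specNorm_le_bound _ _ hβ₁.le
    intro v
    rw [sum4 (fun x => ‖((Gmat β₁ β₂ ⊙ Dmat (0 : Fin 2)) *ᵥ v) x‖^2)]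
    simp only [eFF, eFT, eTF, eTT]
    rw [H0FF, H0FT, H0TF, H0TT,
      show β₁ * Real.sqrt (∑ y, ‖v y‖^2) = Real.sqrt (β₁^2 * ∑ y, ‖v y‖^2) by
        rw [Real.sqrt_mul (by positivity), Real.sqrt_sq hβ₁.le]]
    apply Real.sqrt_le_sqrt
    rw [sum4 (fun y => ‖v y‖^2)]
    simp only [eFF, eFT, eTF, eTT, norm_zero, norm_mul, Complex.norm_real,
      Real.norm_eq_abs, abs_of_pos hβ₁]
    nlinarith [norm_nonneg (v vFF), norm_nonneg (v vTF), sq_nonneg (‖v vFF‖), sq_nonneg (‖v vTF‖)]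
  · have h := entry_le_specNorm (Gmat β₁ β₂ ⊙ Dmat (0 : Fin 2)) vFT vTT
    have he : (Gmat β₁ β₂ ⊙ Dmat (0 : Fin 2)) vFT vTT = (β₁ : ℂ) := by
      simp (config := { decide := true }) [Gmat, Dmat, Matrix.hadamard]
    rw [he, Complex.norm_real, Real.norm_eq_abs, abs_of_pos hβ₁] at h
    exact h

lemma specNorm_H1 (hβ₁ : 0 < β₁) (hβ₂ : 0 < β₂) :
    specNorm (Gmat β₁ β₂ ⊙ Dmat (1 : Fin 2)) = β₂ := by
  apply le_antisymm
  · apply specNorm_le_bound _ _ hβ₂.le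
    intro v
    rw [sum4 (fun x => ‖((Gmat β₁ β₂ ⊙ Dmat (1 : Fin 2)) *ᵥ v) x‖^2)]
    simp only [eFF, eFT, eTF, eTT]
    rw [H1FF, H1FT, H1TF, H1TT,
      show β₂ * Real.sqrt (∑ y, ‖v y‖^2) = Real.sqrt (β₂^2 * ∑ y, ‖v y‖^2) by
        rw [Real.sqrt_mul (by positivity), Real.sqrt_sq hβ₂.le]]
    apply Real.sqrt_le_sqrt
    rw [sum4 (fun y => ‖v y‖^2)]
    simp only [eFF, eFT, eTF, eTT, norm_zero, norm_mul, Complex.norm_real,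
      Real.norm_eq_abs, abs_of_pos hβ₂]
    nlinarith [norm_nonneg (v vFF), norm_nonneg (v vFT), sq_nonneg (‖v vFF‖), sq_nonneg (‖v vFT‖)]
  · have h := entry_le_specNorm (Gmat β₁ β₂ ⊙ Dmat (1 : Fin 2)) vTF vTT
    have he : (Gmat β₁ β₂ ⊙ Dmat (1 : Fin 2)) vTF vTT = (β₂ : ℂ) := by
      simp (config := { decide := true }) [Gmat, Dmat, Matrix.hadamard]
    rw [he, Complex.norm_real, Real.norm_eq_abs, abs_of_pos hβ₂] at h
    exact h

end

section
variable {β₁ β₂ : ℝ}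

lemma G_herm : (Gmat β₁ β₂).IsHermitian := by
  ext x y
  simp only [Matrix.conjTranspose_apply, Gmat, Matrix.of_apply]
  split_ifs <;> simp_all <;> tauto

lemma G_adv : ∀ x y : Fin 2 → Bool, (x 0 && x 1) = (y 0 && y 1) → Gmat β₁ β₂ x y = 0 := by
  intro x y h
  simp only [Gmat, Matrix.of_apply]
  split_ifs with h1 h2
  · rcases h1 with ⟨hx, hy⟩ | ⟨hx, hy⟩ <;> subst hx <;> subst hy <;>
      exact absurd h (by decide)
  · rcases h2 with ⟨hx, hy⟩ | ⟨hx, hy⟩ <;> subst hx <;> subst hy <;>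
      exact absurd h (by decide)
  · rfl

lemma G_nonneg (hβ₁ : 0 < β₁) (hβ₂ : 0 < β₂) :
    ∀ x y, ∃ t : ℝ, 0 ≤ t ∧ Gmat β₁ β₂ x y = (t : ℂ) := by
  intro x y
  simp only [Gmat, Matrix.of_apply]
  split_ifs
  · exact ⟨β₁, hβ₁.le, rfl⟩
  · exact ⟨β₂, hβ₂.le, rfl⟩
  · exact ⟨0, le_refl _, by norm_num⟩

lemma G_ne (hβ₁ : 0 < β₁) : Gmat β₁ β₂ ≠ 0 := by
  intro h
  have h2 : Gmat β₁ β₂ vTT vFT = 0 := by rw [h]; rfl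
  rw [show Gmat β₁ β₂ vTT vFT = (β₁ : ℂ) by
    simp (config := { decide := true }) [Gmat]] at h2
  exact hβ₁.ne' (by exact_mod_cast h2)

end

lemma specNorm_le_four_max (Γ : Matrix (Fin 2 → Bool) (Fin 2 → Bool) ℂ) (M : ℝ)
    (hM : 0 ≤ M) (hmax : ∀ x y, ‖Γ x y‖ ≤ M) : specNorm Γ ≤ 4 * M := by
  apply specNorm_le_bound _ _ (by positivity)
  intro v
  have hcomp : ∀ x, ‖(Γ *ᵥ v) x‖^2 ≤ M^2 * (4 * ∑ y, ‖v y‖^2) := by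
    intro x
    have h1 : ‖(Γ *ᵥ v) x‖ ≤ ∑ y, ‖Γ x y‖ * ‖v y‖ := by
      simpa [Matrix.mulVec, dotProduct] using
        norm_sum_le Finset.univ (fun y => Γ x y * v y)
    have h2 : ∑ y, ‖Γ x y‖ * ‖v y‖ ≤ M * ∑ y, ‖v y‖ := by
      rw [Finset.mul_sum]
      exact Finset.sum_le_sum fun y _ =>
        mul_le_mul_of_nonneg_right (hmax x y) (norm_nonneg _)
    have h3 : (∑ y, ‖v y‖)^2 ≤ 4 * ∑ y, ‖v y‖^2 := by
      rw [sum4 (fun y => ‖v y‖), sum4 (fun y => ‖v y‖^2)]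
      nlinarith [sq_nonneg (‖v ![false,false]‖ - ‖v ![false,true]‖),
        sq_nonneg (‖v ![false,false]‖ - ‖v ![true,false]‖),
        sq_nonneg (‖v ![false,false]‖ - ‖v ![true,true]‖),
        sq_nonneg (‖v ![false,true]‖ - ‖v ![true,false]‖),
        sq_nonneg (‖v ![false,true]‖ - ‖v ![true,true]‖),
        sq_nonneg (‖v ![true,false]‖ - ‖v ![true,true]‖)]
    have h4 := pow_le_pow_left₀ (norm_nonneg _) (h1.trans h2) 2
    have h5 : (M * ∑ y, ‖v y‖)^2 = M^2 * (∑ y, ‖v y‖)^2 := by ring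
    nlinarith [sq_nonneg M]
  have hsum : ∑ x, ‖(Γ *ᵥ v) x‖^2 ≤ (4*M)^2 * ∑ y, ‖v y‖^2 := by
    rw [sum4 (fun x => ‖(Γ *ᵥ v) x‖^2)]
    nlinarith [hcomp ![false,false], hcomp ![false,true], hcomp ![true,false],
      hcomp ![true,true]]
  calc Real.sqrt (∑ x, ‖(Γ *ᵥ v) x‖^2) ≤ Real.sqrt ((4*M)^2 * ∑ y, ‖v y‖^2) :=
        Real.sqrt_le_sqrt hsum
  _ = 4*M * Real.sqrt (∑ y, ‖v y‖^2) := by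
      rw [Real.sqrt_mul (by positivity), Real.sqrt_sq (by positivity)]


theorem stmt15
    (β₁ β₂ : ℝ) (hβ₁ : 0 < β₁) (hβ₂ : 0 < β₂) :
    Real.sqrt (β₁ ^ 2 + β₂ ^ 2) ≤
      ADVcost (fun x : Fin 2 → Bool => x 0 && x 1) ![β₁, β₂] := by
  unfold ADVcost
  apply le_csSup
  · refine ⟨4*(β₁+β₂), ?_⟩
    rintro r ⟨Γ, -, hadv, -, hΓ, rfl⟩
    obtain ⟨⟨x₀, y₀⟩, hmax⟩ := Finite.exists_max
      (fun p : (Fin 2 → Bool) × (Fin 2 → Bool) => ‖Γ p.1 p.2‖)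
    have hMpos : 0 < ‖Γ x₀ y₀‖ := by
      obtain ⟨x, y, hxy⟩ : ∃ x y, Γ x y ≠ 0 := by
        by_contra h; push_neg at h
        exact hΓ (by ext x y; simp [h x y])
      exact lt_of_lt_of_le (norm_pos_iff.mpr hxy) (hmax (x, y))
    have hne0 : Γ x₀ y₀ ≠ 0 := norm_pos_iff.mp hMpos
    have hgne : ¬ (x₀ 0 && x₀ 1) = (y₀ 0 && y₀ 1) := fun h => hne0 (hadv x₀ y₀ h)
    obtain ⟨i, hi⟩ : ∃ i, x₀ i ≠ y₀ i := by
      by_contra h; push_neg at h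
      exact hgne (by rw [funext h])
    have hden : ‖Γ x₀ y₀‖ ≤ specNorm (Γ ⊙ Dmat i) := by
      have he : (Γ ⊙ Dmat i) x₀ y₀ = Γ x₀ y₀ := by
        simp [Matrix.hadamard_apply, Dmat, hi]
      rw [← he]; exact entry_le_specNorm _ _ _
    have hnum : specNorm Γ ≤ 4 * ‖Γ x₀ y₀‖ :=
      specNorm_le_four_max Γ _ (norm_nonneg _) (fun x y => hmax (x, y))
    refine le_trans (ciInf_le (Finite.bddBelow_range _) i) ?_
    have hαpos : 0 < ![β₁,β₂] i := by fin_cases i <;> simpa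
    have hαle : ![β₁,β₂] i ≤ β₁ + β₂ := by
      fin_cases i <;> simp <;> linarith
    calc ![β₁,β₂] i * specNorm Γ / specNorm (Γ ⊙ Dmat i)
        ≤ ![β₁,β₂] i * (4 * ‖Γ x₀ y₀‖) / ‖Γ x₀ y₀‖ :=
          div_le_div₀ (by positivity) (mul_le_mul_of_nonneg_left hnum hαpos.le) hMpos hden
      _ = 4 * ![β₁,β₂] i := by
          rw [mul_comm (![β₁,β₂] i), mul_assoc, mul_div_assoc, mul_comm ‖Γ x₀ y₀‖,
            mul_div_assoc, div_self hMpos.ne', mul_one]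
      _ ≤ 4 * (β₁ + β₂) := by linarith
  · refine ⟨Gmat β₁ β₂, G_herm, G_adv, G_nonneg hβ₁ hβ₂, G_ne hβ₁, ?_⟩
    have hterm : (fun i : Fin 2 =>
        ![β₁, β₂] i * specNorm (Gmat β₁ β₂) / specNorm (Gmat β₁ β₂ ⊙ Dmat i))
          = fun _ => Real.sqrt (β₁^2 + β₂^2) := by
      funext i
      fin_cases i <;> simp only [Fin.isValue, Matrix.cons_val_zero, Matrix.cons_val_one,
        Matrix.head_cons, Fin.mk_one, Fin.zero_eta, id_eq]
      · rw [specNorm_G hβ₁ hβ₂, specNorm_H0 hβ₁ hβ₂,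
          mul_comm, mul_div_assoc, div_self hβ₁.ne', mul_one]
      · rw [specNorm_G hβ₁ hβ₂, specNorm_H1 hβ₁ hβ₂,
          mul_comm, mul_div_assoc, div_self hβ₂.ne', mul_one]
    rw [hterm, ciInf_const]
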